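/- arXiv:1111.2476 — 3 statements merged into one kernel-verified Lean document; each statement's English description precedes it below -/
import Mathlib

section
/- Let X be a random variable on a probability space with measure P, and let Q be a probability measure absolutely continuous with respect to P with density dQ/dP = exp(−λ S − λ²v/2), where S is a centered Gaussian variable with variance v under P. Then for every γ ∈ (0,1) and every nonnegative random variable Z, E_P[Z^γ] ≤ (E_Q[Z])^γ · exp(λ² γ v / (2(1−γ))). -/
open MeasureTheory ProbabilityTheory Real

lemma gauss_pdf_shift (v : NNReal) (hv : v ≠ 0) (t x : ℝ) :
    gaussianPDFReal 0 v x * exp (t * x)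
      = exp ((v : ℝ) * t ^ 2 / 2) * gaussianPDFReal (t * v) v x := by
  have hv' : (v : ℝ) ≠ 0 := by exact_mod_cast hv
  simp only [gaussianPDFReal]
  have h : -(x - 0) ^ 2 / (2 * (v:ℝ)) + t * x
      = (v:ℝ) * t ^ 2 / 2 + -(x - t * v) ^ 2 / (2 * (v:ℝ)) := by field_simp; ring
  rw [mul_assoc, ← Real.exp_add, h, Real.exp_add, mul_left_comm]

lemma gauss_smul_eq (v : NNReal) (hv : v ≠ 0) (t : ℝ) :
    (fun x => (gaussianPDFReal 0 v x).toNNReal • exp (t * x))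
      = fun x => exp ((v : ℝ) * t ^ 2 / 2) * gaussianPDFReal (t * v) v x := by
  funext x
  rw [NNReal.smul_def, smul_eq_mul, Real.coe_toNNReal _ (gaussianPDFReal_nonneg 0 v x),
    gauss_pdf_shift v hv t x]

lemma gauss_pdf_coe (v : NNReal) :
    gaussianPDF 0 v = fun x => (((gaussianPDFReal 0 v x).toNNReal : NNReal) : ENNReal) := rfl

lemma gauss_exp_integrable (t : ℝ) (v : NNReal) :
    Integrable (fun x => exp (t * x)) (gaussianReal 0 v) := by
  by_cases hv : v = 0
  · rw [hv, gaussianReal_zero_var]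
    refine (integrable_const (exp (t * 0))).congr ?_
    rw [Filter.EventuallyEq, ae_dirac_iff]
    exact measurableSet_eq_fun measurable_const (by fun_prop)
  · rw [gaussianReal_of_var_ne_zero 0 hv, gauss_pdf_coe,
      integrable_withDensity_iff_integrable_smul ((measurable_gaussianPDFReal 0 v).real_toNNReal),
      gauss_smul_eq v hv t]
    exact (integrable_gaussianPDFReal (t * v) v).const_mul _

lemma gauss_exp_integral (t : ℝ) (v : NNReal) :
    ∫ x, exp (t * x) ∂(gaussianReal 0 v) = exp ((v : ℝ) * t ^ 2 / 2) := by
  by_cases hv : v = 0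
  · simp [hv, gaussianReal_zero_var]
  · rw [gaussianReal_of_var_ne_zero 0 hv, gauss_pdf_coe,
      integral_withDensity_eq_integral_smul ((measurable_gaussianPDFReal 0 v).real_toNNReal),
      gauss_smul_eq v hv t, integral_const_mul, integral_gaussianPDFReal_eq_one (t * v) hv, mul_one]

lemma memLp_of_integrable_rpow {α : Type*} [MeasurableSpace α] {μ : Measure α} {h : α → ℝ}
    (hm : MeasureTheory.AEStronglyMeasurable h μ) {p : ℝ} (hp : 0 < p)
    (hint : Integrable (fun x => ‖h x‖ ^ p) μ) : MemLp h (ENNReal.ofReal p) μ := by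
  have p0 : ENNReal.ofReal p ≠ 0 := by simp [ENNReal.ofReal_eq_zero, hp.not_ge]
  have ptop : ENNReal.ofReal p ≠ ⊤ := ENNReal.ofReal_ne_top
  refine (memLp_norm_rpow_iff (q := ENNReal.ofReal p) hm p0 ptop).1 ?_
  rw [ENNReal.div_self p0 ptop, memLp_one_iff_integrable]
  simpa [ENNReal.toReal_ofReal hp.le] using hint


/-- Change-of-measure Hölder estimate: if `dQ/dP = exp(−λS − λ²v/2)` with `S`
a centered Gaussian of variance `v` under `P`, then for `γ ∈ (0,1)` and
nonnegative `Z`, `E_P[Z^γ] ≤ (E_Q[Z])^γ exp(λ²γv/(2(1−γ)))`. -/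
theorem stmt_4 {Ω : Type*} [MeasurableSpace Ω] (P : Measure Ω) [IsProbabilityMeasure P]
    (S : Ω → ℝ) (hS : Measurable S) (v : NNReal)
    (hgauss : P.map S = gaussianReal 0 v)
    (l : ℝ) (Q : Measure Ω)
    (hQ : Q = P.withDensity (fun x => ENNReal.ofReal (exp (-l * S x - l ^ 2 * v / 2))))
    (γ : ℝ) (hγ : γ ∈ Set.Ioo (0:ℝ) 1)
    (Z : Ω → ℝ) (hZmeas : Measurable Z) (hZnn : ∀ x, 0 ≤ Z x)
    (hZint : Integrable Z Q) (hZγint : Integrable (fun x => Z x ^ γ) P) :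
    ∫ x, Z x ^ γ ∂P ≤ (∫ x, Z x ∂Q) ^ γ * exp (l ^ 2 * γ * v / (2 * (1 - γ))) := by
  obtain ⟨hγ0, hγ1⟩ := hγ
  have h1γ : (0:ℝ) < 1 - γ := by linarith
  set D : Ω → ℝ := fun x => exp (-l * S x - l ^ 2 * v / 2) with hDdef
  have hDpos : ∀ x, 0 < D x := fun x => exp_pos _
  have hDmeas : Measurable D := by fun_prop
  set f : Ω → NNReal := fun x => (D x).toNNReal with hfdef
  have hfmeas : Measurable f := hDmeas.real_toNNReal
  have hQ' : Q = P.withDensity (fun x => ((f x : NNReal) : ENNReal)) := by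
    rw [hQ]; rfl
  -- transfer E_Q[Z] to P
  have hsmul : ∀ (g : Ω → ℝ), (fun x => f x • g x) = fun x => g x * D x := by
    intro g; funext x
    rw [NNReal.smul_def, smul_eq_mul, hfdef, Real.coe_toNNReal _ (hDpos x).le, mul_comm]
  have hEQ : ∫ x, Z x ∂Q = ∫ x, Z x * D x ∂P := by
    rw [hQ', integral_withDensity_eq_integral_smul hfmeas, hsmul]
  have hZD : Integrable (fun x => Z x * D x) P := by
    rw [← hsmul Z]
    exact (integrable_withDensity_iff_integrable_smul hfmeas).1 (hQ' ▸ hZint)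
  -- exponential integrability under P
  have hm : ∀ t : ℝ, Measurable fun x : ℝ => exp (t * x) := fun t =>
    Real.measurable_exp.comp (measurable_id.const_mul t)
  have hexpP : ∀ t : ℝ, Integrable (fun x => exp (t * S x)) P := by
    intro t
    have h := gauss_exp_integrable t v
    rw [← hgauss] at h
    exact (integrable_map_measure (hm t).aestronglyMeasurable hS.aemeasurable).mp h
  have hexpPint : ∀ t : ℝ, ∫ x, exp (t * S x) ∂P = exp ((v:ℝ) * t ^ 2 / 2) := by
    intro t
    rw [← gauss_exp_integral t v, ← hgauss,
      integral_map hS.aemeasurable (hm t).aestronglyMeasurable]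
  -- Hölder setup
  set F : Ω → ℝ := fun x => (Z x * D x) ^ γ with hFdef
  set G : Ω → ℝ := fun x => D x ^ (-γ) with hGdef
  have hFnn : ∀ x, 0 ≤ F x := fun x => Real.rpow_nonneg (mul_nonneg (hZnn x) (hDpos x).le) _
  have hGnn : ∀ x, 0 ≤ G x := fun x => Real.rpow_nonneg (hDpos x).le _
  have hFG : ∀ x, Z x ^ γ = F x * G x := by
    intro x
    show Z x ^ γ = (Z x * D x) ^ γ * D x ^ (-γ)
    rw [Real.mul_rpow (hZnn x) (hDpos x).le, mul_assoc,
      ← Real.rpow_add (hDpos x), add_neg_cancel, Real.rpow_zero, mul_one]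
  set t0 : ℝ := l * γ / (1 - γ) with ht0
  set c0 : ℝ := γ / (1 - γ) * (l ^ 2 * v / 2) with hc0
  have hGq : ∀ x, G x ^ (1 / (1 - γ)) = exp (t0 * S x) * exp c0 := by
    intro x
    show ((exp (-l * S x - l ^ 2 * v / 2)) ^ (-γ)) ^ (1 / (1 - γ)) = exp (t0 * S x) * exp c0
    rw [← Real.exp_mul, ← Real.exp_mul, ← Real.exp_add]
    congr 1
    rw [ht0, hc0]
    field_simp
    ring
  have hFp : ∀ x, F x ^ (1 / γ) = Z x * D x := by
    intro x
    show ((Z x * D x) ^ γ) ^ (1 / γ) = Z x * D x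
    rw [one_div, Real.rpow_rpow_inv (mul_nonneg (hZnn x) (hDpos x).le) hγ0.ne']
  -- Memℒp facts
  have hFmeas : Measurable F :=
    (Real.continuous_rpow_const hγ0.le).measurable.comp (hZmeas.mul hDmeas)
  have hGmeas : Measurable G := by
    have hGeq : G = fun x => exp ((-l * S x - l ^ 2 * v / 2) * (-γ)) := by
      funext x
      exact (Real.exp_mul _ _).symm
    rw [hGeq]
    exact Real.measurable_exp.comp (by fun_prop)
  have hFint : Integrable (fun x => ‖F x‖ ^ (1 / γ)) P :=
    hZD.congr (Filter.Eventually.of_forall fun x => by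
      show Z x * D x = ‖F x‖ ^ (1 / γ)
      rw [Real.norm_of_nonneg (hFnn x), hFp x])
  have hGint : Integrable (fun x => ‖G x‖ ^ (1 / (1 - γ))) P :=
    (((hexpP t0).mul_const (exp c0))).congr (Filter.Eventually.of_forall fun x => by
      show exp (t0 * S x) * exp c0 = ‖G x‖ ^ (1 / (1 - γ))
      rw [Real.norm_of_nonneg (hGnn x), hGq x])
  have hFmem : MemLp F (ENNReal.ofReal (1 / γ)) P :=
    memLp_of_integrable_rpow hFmeas.aestronglyMeasurable (by positivity) hFint
  have hGmem : MemLp G (ENNReal.ofReal (1 / (1 - γ))) P :=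
    memLp_of_integrable_rpow hGmeas.aestronglyMeasurable (by positivity) hGint
  have hpq : Real.HolderConjugate (1 / γ) (1 / (1 - γ)) := by
    constructor
    · rw [one_div, one_div, inv_inv, inv_inv, inv_one]; ring
    · positivity
    · positivity
  have holder := integral_mul_le_Lp_mul_Lq_of_nonneg hpq
    (Filter.Eventually.of_forall hFnn) (Filter.Eventually.of_forall hGnn) hFmem hGmem
  rw [one_div_one_div, one_div_one_div] at holder
  -- rewrite the three integrals
  have e1 : ∫ x, F x * G x ∂P = ∫ x, Z x ^ γ ∂P :=
    integral_congr_ae (Filter.Eventually.of_forall fun x => (hFG x).symm)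
  have e2 : ∫ x, F x ^ (1 / γ) ∂P = ∫ x, Z x ∂Q := by
    rw [hEQ]
    exact integral_congr_ae (Filter.Eventually.of_forall fun x => hFp x)
  have e3 : ∫ x, G x ^ (1 / (1 - γ)) ∂P = exp ((v:ℝ) * t0 ^ 2 / 2) * exp c0 := by
    rw [integral_congr_ae (Filter.Eventually.of_forall fun x => hGq x),
      integral_mul_const, hexpPint t0]
  rw [e1, e2, e3] at holder
  refine holder.trans ?_
  have hfin : (exp ((v:ℝ) * t0 ^ 2 / 2) * exp c0) ^ (1 - γ)
      = exp (l ^ 2 * γ * v / (2 * (1 - γ))) := by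
    rw [← Real.exp_add, ← Real.exp_mul]
    congr 1
    rw [ht0, hc0]
    field_simp
    ring
  rw [hfin]
end

section
/- Let Q̃_β and Q̃_0 be irreducible stochastic matrices on a finite set S with Q̃_β(x,y) = Q_β(x,y) r_β(y)/(λ_β r_β(x)) where Q_β(x,y) = e^{β²G(y)} Q_0(x,y) for a function G: S → ℝ, λ_β the Perron-Frobenius eigenvalue of Q_β, and r_β a positive right eigenvector. Let π_β be the invariant probability of Q̃_β. Then the specific relative entropy of the π_β-stationary chain with kernel Q̃_β with respect to the chain with kernel Q̃_0, defined as lim_n (1/n) H(law of (X^{(0)},...,X^{(n)}) under Q̃_β ‖ law under Q̃_0), equals β² E_{π_β}[G(X)] − log λ_β, and in particular β² E_{π_β}[G(X)] − log λ_β ≥ 0. -/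
open Filter

/-- A nonnegative matrix is irreducible if some power connects any two states
with positive weight. -/
def MatIrreducible {S : Type*} [Fintype S] [DecidableEq S] (Q : Matrix S S ℝ) : Prop :=
  ∀ x y, ∃ n : ℕ, 0 < (Q ^ n) x y

private lemma gibbs_pt {a b : ℝ} (ha : 0 ≤ a) (hb : 0 ≤ b) (h : 0 < a → 0 < b) :
    a - b ≤ a * Real.log (a / b) := by
  rcases ha.eq_or_lt with h0 | h0
  · rw [← h0]; simpa using hb
  · have hbp := h h0
    have h1 : Real.log (b / a) ≤ b / a - 1 := Real.log_le_sub_one_of_pos (by positivity)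
    have h2 : Real.log (b / a) = -Real.log (a / b) := by
      rw [← Real.log_inv]; congr 1; rw [inv_div]
    have h4 : 1 - b / a ≤ Real.log (a / b) := by rw [h2] at h1; linarith
    have h5 := mul_le_mul_of_nonneg_left h4 h0.le
    have h3 : a * (b / a) = b := by field_simp
    rw [mul_sub, mul_one, h3] at h5
    linarith

private lemma log_split {a b c d : ℝ} (ha : 0 ≤ a) (hc : 0 ≤ c)
    (hb : 0 < a → 0 < b) (hd : 0 < c → 0 < d) :
    (a * c) * Real.log ((a * c) / (b * d)) =
      c * (a * Real.log (a / b)) + a * (c * Real.log (c / d)) := by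
  rcases ha.eq_or_lt with h | h
  · simp [← h]
  rcases hc.eq_or_lt with h' | h'
  · simp [← h']
  have hb' := hb h
  have hd' := hd h'
  have key : Real.log ((a * c) / (b * d)) = Real.log (a / b) + Real.log (c / d) := by
    rw [Real.log_div (by positivity) (by positivity),
        Real.log_div h.ne' hb'.ne', Real.log_div h'.ne' hd'.ne',
        Real.log_mul h.ne' h'.ne', Real.log_mul hb'.ne' hd'.ne']
    ring
  rw [key]; ring

private lemma marginal_last {S : Type*} [Fintype S] [DecidableEq S]
    (π : S → ℝ) (Q : Matrix S S ℝ)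
    (hinv : ∀ y, ∑ x, π x * Q x y = π y) :
    ∀ (n : ℕ) (f : S → ℝ),
      ∑ p : Fin (n + 1) → S,
        (π (p 0) * ∏ i : Fin n, Q (p i.castSucc) (p i.succ)) * f (p (Fin.last n))
        = ∑ x, π x * f x := by
  intro n
  induction n with
  | zero =>
    intro f
    rw [← Equiv.sum_comp (Equiv.funUnique (Fin 1) S).symm]
    simp
  | succ n ih =>
    intro f
    rw [← Equiv.sum_comp (Fin.consEquiv (fun _ : Fin (n + 2) => S))]
    rw [Fintype.sum_prod_type]
    simp only [Fin.consEquiv, Equiv.coe_fn_mk, Fin.cons_zero, Fin.prod_univ_succ,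
      Fin.cons_succ, Fin.castSucc_zero, ← Fin.succ_castSucc, ← Fin.succ_last]
    calc ∑ x, ∑ q : Fin (n + 1) → S,
          (π x * (Q x (q 0) * ∏ i : Fin n, Q (q i.castSucc) (q i.succ))) * f (q (Fin.last n))
        = ∑ q : Fin (n + 1) → S,
          (π (q 0) * ∏ i : Fin n, Q (q i.castSucc) (q i.succ)) * f (q (Fin.last n)) := by
          rw [Finset.sum_comm]
          refine Finset.sum_congr rfl fun q _ => ?_
          rw [← hinv (q 0), Finset.sum_mul, Finset.sum_mul]
          exact Finset.sum_congr rfl fun x _ => by ring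
      _ = ∑ x, π x * f x := ih f

private lemma Hrec {S : Type*} [Fintype S] [DecidableEq S]
    (πβ π0 : S → ℝ) (A B : Matrix S S ℝ)
    (hπβnn : ∀ x, 0 ≤ πβ x) (hπ0 : ∀ x, 0 < π0 x)
    (hAnn : ∀ x y, 0 ≤ A x y)
    (hsupp : ∀ x y, 0 < A x y → 0 < B x y)
    (hrowA : ∀ x, ∑ y, A x y = 1)
    (hinvA : ∀ y, ∑ x, πβ x * A x y = πβ y) (n : ℕ) :
    ∑ p : Fin (n + 2) → S,
        (πβ (p 0) * ∏ i : Fin (n + 1), A (p i.castSucc) (p i.succ)) *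
          Real.log ((πβ (p 0) * ∏ i : Fin (n + 1), A (p i.castSucc) (p i.succ)) /
            (π0 (p 0) * ∏ i : Fin (n + 1), B (p i.castSucc) (p i.succ)))
      = (∑ p : Fin (n + 1) → S,
        (πβ (p 0) * ∏ i : Fin n, A (p i.castSucc) (p i.succ)) *
          Real.log ((πβ (p 0) * ∏ i : Fin n, A (p i.castSucc) (p i.succ)) /
            (π0 (p 0) * ∏ i : Fin n, B (p i.castSucc) (p i.succ))))
        + ∑ x, πβ x * ∑ y, A x y * Real.log (A x y / B x y) := by
  have hsnoc0 : ∀ (q : Fin (n + 1) → S) (y : S), (Fin.snoc q y : Fin (n + 2) → S) 0 = q 0 := by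
    intro q y
    rw [show (0 : Fin (n + 2)) = Fin.castSucc 0 by simp, Fin.snoc_castSucc]
  rw [← Equiv.sum_comp (Fin.snocEquiv (fun _ : Fin (n + 2) => S))]
  rw [Fintype.sum_prod_type]
  rw [Finset.sum_comm]
  simp only [Fin.snocEquiv, Equiv.coe_fn_mk, Fin.prod_univ_castSucc, Fin.snoc_castSucc,
    Fin.snoc_last, Fin.succ_castSucc, Fin.succ_last, hsnoc0]
  have main : ∀ q : Fin (n + 1) → S,
      ∑ y, (πβ (q 0) * ((∏ i : Fin n, A (q i.castSucc) (q i.succ)) * A (q (Fin.last n)) y)) *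
        Real.log ((πβ (q 0) * ((∏ i : Fin n, A (q i.castSucc) (q i.succ)) * A (q (Fin.last n)) y)) /
          (π0 (q 0) * ((∏ i : Fin n, B (q i.castSucc) (q i.succ)) * B (q (Fin.last n)) y)))
      = (πβ (q 0) * ∏ i : Fin n, A (q i.castSucc) (q i.succ)) *
          Real.log ((πβ (q 0) * ∏ i : Fin n, A (q i.castSucc) (q i.succ)) /
            (π0 (q 0) * ∏ i : Fin n, B (q i.castSucc) (q i.succ)))
        + (πβ (q 0) * ∏ i : Fin n, A (q i.castSucc) (q i.succ)) *
            ∑ y, A (q (Fin.last n)) y * Real.log (A (q (Fin.last n)) y / B (q (Fin.last n)) y) := by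
    intro q
    set Wa := πβ (q 0) * ∏ i : Fin n, A (q i.castSucc) (q i.succ) with hWa
    set Wb := π0 (q 0) * ∏ i : Fin n, B (q i.castSucc) (q i.succ) with hWb
    have hWann : 0 ≤ Wa :=
      mul_nonneg (hπβnn _) (Finset.prod_nonneg fun i _ => hAnn _ _)
    have hWab : 0 < Wa → 0 < Wb := by
      intro hWapos
      refine mul_pos (hπ0 _) (Finset.prod_pos fun i _ => hsupp _ _ ?_)
      rcases (hAnn (q i.castSucc) (q i.succ)).eq_or_lt with h | h
      · exfalso
        rw [hWa] at hWapos
        have : (∏ i : Fin n, A (q i.castSucc) (q i.succ)) = 0 :=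
          Finset.prod_eq_zero (Finset.mem_univ i) h.symm
        rw [this, mul_zero] at hWapos
        exact lt_irrefl 0 hWapos
      · exact h
    calc ∑ y, (πβ (q 0) * ((∏ i : Fin n, A (q i.castSucc) (q i.succ)) * A (q (Fin.last n)) y)) *
          Real.log ((πβ (q 0) * ((∏ i : Fin n, A (q i.castSucc) (q i.succ)) * A (q (Fin.last n)) y)) /
            (π0 (q 0) * ((∏ i : Fin n, B (q i.castSucc) (q i.succ)) * B (q (Fin.last n)) y)))
        = ∑ y, (A (q (Fin.last n)) y * (Wa * Real.log (Wa / Wb))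
            + Wa * (A (q (Fin.last n)) y * Real.log (A (q (Fin.last n)) y / B (q (Fin.last n)) y))) := by
          refine Finset.sum_congr rfl fun y _ => ?_
          rw [← mul_assoc, ← mul_assoc, ← hWa, ← hWb]
          exact log_split hWann (hAnn _ _) hWab (hsupp _ _)
      _ = Wa * Real.log (Wa / Wb)
          + Wa * ∑ y, A (q (Fin.last n)) y * Real.log (A (q (Fin.last n)) y / B (q (Fin.last n)) y) := by
          rw [Finset.sum_add_distrib, ← Finset.sum_mul, hrowA, one_mul, ← Finset.mul_sum]
  rw [Finset.sum_congr rfl (fun q (_ : q ∈ Finset.univ) => main q), Finset.sum_add_distrib]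
  congr 1
  exact marginal_last πβ A hinvA n (fun x => ∑ y, A x y * Real.log (A x y / B x y))

/-- The specific relative entropy of the stationary chain with Doob kernel
`Q̃_β` (coming from `Q_β = e^{β²G} Q_0`, `Q_0` stochastic) with respect to the
stationary chain with kernel `Q̃_0` equals `β² E_{π_β}[G] − log λ_β`; in
particular this quantity is nonnegative. The relative entropy at horizon `n`
is that of the laws of `(X⁰,…,Xⁿ)` on `S^{n+1}`. -/
theorem stmt_11 {S : Type*} [Fintype S] [DecidableEq S] [Nonempty S]
    (Q0 : Matrix S S ℝ) (hQ0nn : ∀ x y, 0 ≤ Q0 x y)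
    (hQ0stoch : ∀ x, ∑ y, Q0 x y = 1)
    (G : S → ℝ) (β : ℝ)
    (Qβ : Matrix S S ℝ) (hQβ : ∀ x y, Qβ x y = Real.exp (β ^ 2 * G y) * Q0 x y)
    (lamβ lam0 : ℝ) (hlamβ : 0 < lamβ) (hlam0 : 0 < lam0)
    (rβ r0 : S → ℝ) (hrβ : ∀ x, 0 < rβ x) (hr0 : ∀ x, 0 < r0 x)
    (heigβ : Qβ.mulVec rβ = lamβ • rβ) (heig0 : Q0.mulVec r0 = lam0 • r0)
    (Qtβ Qt0 : Matrix S S ℝ)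
    (hQtβ : ∀ x y, Qtβ x y = Qβ x y * rβ y / (lamβ * rβ x))
    (hQt0 : ∀ x y, Qt0 x y = Q0 x y * r0 y / (lam0 * r0 x))
    (hirrβ : MatIrreducible Qtβ) (hirr0 : MatIrreducible Qt0)
    (πβ π0 : S → ℝ) (hπβnn : ∀ x, 0 ≤ πβ x) (hπ0pos : ∀ x, 0 < π0 x)
    (hπβ1 : ∑ x, πβ x = 1) (hπ01 : ∑ x, π0 x = 1)
    (hinvβ : ∀ y, ∑ x, πβ x * Qtβ x y = πβ y)
    (hinv0 : ∀ y, ∑ x, π0 x * Qt0 x y = π0 y) :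
    Tendsto
      (fun n : ℕ =>
        (1 / (n : ℝ)) *
          ∑ p : Fin (n + 1) → S,
            (πβ (p 0) * ∏ i : Fin n, Qtβ (p i.castSucc) (p i.succ)) *
              Real.log
                ((πβ (p 0) * ∏ i : Fin n, Qtβ (p i.castSucc) (p i.succ)) /
                  (π0 (p 0) * ∏ i : Fin n, Qt0 (p i.castSucc) (p i.succ))))
      atTop (nhds (β ^ 2 * (∑ x, πβ x * G x) - Real.log lamβ)) ∧
    0 ≤ β ^ 2 * (∑ x, πβ x * G x) - Real.log lamβ := by
  classical
  -- basic facts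
  have hQtβnn : ∀ x y, 0 ≤ Qtβ x y := fun x y => by
    rw [hQtβ, hQβ]
    exact div_nonneg (mul_nonneg (mul_nonneg (Real.exp_pos _).le (hQ0nn x y)) (hrβ y).le)
      (mul_pos hlamβ (hrβ x)).le
  have hQt0nn : ∀ x y, 0 ≤ Qt0 x y := fun x y => by
    rw [hQt0]
    exact div_nonneg (mul_nonneg (hQ0nn x y) (hr0 y).le) (mul_pos hlam0 (hr0 x)).le
  have hQ0supp : ∀ x y, 0 < Qtβ x y → 0 < Q0 x y := by
    intro x y h
    rcases (hQ0nn x y).eq_or_lt with he | hp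
    · exfalso
      rw [hQtβ, hQβ, ← he] at h
      simp at h
    · exact hp
  have hsupp : ∀ x y, 0 < Qtβ x y → 0 < Qt0 x y := by
    intro x y h
    rw [hQt0]
    exact div_pos (mul_pos (hQ0supp x y h) (hr0 y)) (mul_pos hlam0 (hr0 x))
  have hrowβ : ∀ x, ∑ y, Qtβ x y = 1 := by
    intro x
    have hv : ∑ y, Qβ x y * rβ y = lamβ * rβ x := by
      have := congrFun heigβ x
      simpa [Matrix.mulVec, dotProduct] using this
    simp only [hQtβ]
    rw [← Finset.sum_div, hv, div_self (mul_pos hlamβ (hrβ x)).ne']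
  have hrow0 : ∀ x, ∑ y, Qt0 x y = 1 := by
    intro x
    have hv : ∑ y, Q0 x y * r0 y = lam0 * r0 x := by
      have := congrFun heig0 x
      simpa [Matrix.mulVec, dotProduct] using this
    simp only [hQt0]
    rw [← Finset.sum_div, hv, div_self (mul_pos hlam0 (hr0 x)).ne']
  have hlam0eq : lam0 = 1 := by
    have hv : ∀ x, ∑ y, Q0 x y * r0 y = lam0 * r0 x := fun x => by
      have := congrFun heig0 x
      simpa [Matrix.mulVec, dotProduct] using this
    obtain ⟨x1, -, hx1⟩ := Finset.exists_max_image (Finset.univ : Finset S) r0 Finset.univ_nonempty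
    obtain ⟨x2, -, hx2⟩ := Finset.exists_min_image (Finset.univ : Finset S) r0 Finset.univ_nonempty
    have h1 : lam0 * r0 x1 ≤ 1 * r0 x1 := by
      rw [one_mul, ← hv x1]
      calc ∑ y, Q0 x1 y * r0 y ≤ ∑ y, Q0 x1 y * r0 x1 :=
            Finset.sum_le_sum fun y _ =>
              mul_le_mul_of_nonneg_left (hx1 y (Finset.mem_univ y)) (hQ0nn x1 y)
        _ = r0 x1 := by rw [← Finset.sum_mul, hQ0stoch, one_mul]
    have h2 : 1 * r0 x2 ≤ lam0 * r0 x2 := by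
      rw [one_mul, ← hv x2]
      calc ∑ y, Q0 x2 y * r0 y ≥ ∑ y, Q0 x2 y * r0 x2 :=
            Finset.sum_le_sum fun y _ =>
              mul_le_mul_of_nonneg_left (hx2 y (Finset.mem_univ y)) (hQ0nn x2 y)
        _ = r0 x2 := by rw [← Finset.sum_mul, hQ0stoch, one_mul]
    have e1 := (mul_le_mul_iff_of_pos_right (hr0 x1)).mp h1
    have e2 := (mul_le_mul_iff_of_pos_right (hr0 x2)).mp h2
    linarith
  -- the pointwise logarithm identity
  have hlog : ∀ x y, Qtβ x y * Real.log (Qtβ x y / Qt0 x y)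
      = Qtβ x y * ((β ^ 2 * G y + Real.log (rβ y) - Real.log (r0 y))
          - (Real.log (rβ x) - Real.log (r0 x)) - Real.log lamβ) := by
    intro x y
    rcases (hQtβnn x y).eq_or_lt with h | h
    · rw [← h, zero_mul, zero_mul]
    · have hQ0p := hQ0supp x y h
      have hQt0p := hsupp x y h
      congr 1
      rw [Real.log_div h.ne' hQt0p.ne']
      rw [hQtβ, hQt0, hQβ, hlam0eq, one_mul]
      rw [Real.log_div (mul_pos (mul_pos (Real.exp_pos _) hQ0p) (hrβ y)).ne'
            (mul_pos hlamβ (hrβ x)).ne',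
          Real.log_div (mul_pos hQ0p (hr0 y)).ne' (hr0 x).ne',
          Real.log_mul (mul_pos (Real.exp_pos _) hQ0p).ne' (hrβ y).ne',
          Real.log_mul (Real.exp_pos _).ne' hQ0p.ne',
          Real.log_mul hlamβ.ne' (hrβ x).ne',
          Real.log_mul hQ0p.ne' (hr0 y).ne',
          Real.log_exp]
      ring
  -- the per-step entropy production
  have hK : ∑ x, πβ x * ∑ y, Qtβ x y * Real.log (Qtβ x y / Qt0 x y)
      = β ^ 2 * (∑ x, πβ x * G x) - Real.log lamβ := by
    have hφx : ∀ x, ∑ y, Qtβ x y * Real.log (Qtβ x y / Qt0 x y)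
        = (∑ y, Qtβ x y * (β ^ 2 * G y + Real.log (rβ y) - Real.log (r0 y)))
          - (Real.log (rβ x) - Real.log (r0 x)) - Real.log lamβ := by
      intro x
      calc ∑ y, Qtβ x y * Real.log (Qtβ x y / Qt0 x y)
          = ∑ y, Qtβ x y * ((β ^ 2 * G y + Real.log (rβ y) - Real.log (r0 y))
              - (Real.log (rβ x) - Real.log (r0 x)) - Real.log lamβ) :=
            Finset.sum_congr rfl fun y _ => hlog x y
        _ = (∑ y, Qtβ x y * (β ^ 2 * G y + Real.log (rβ y) - Real.log (r0 y)))
            - (∑ y, Qtβ x y) * (Real.log (rβ x) - Real.log (r0 x))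
            - (∑ y, Qtβ x y) * Real.log lamβ := by
            rw [Finset.sum_mul, Finset.sum_mul, ← Finset.sum_sub_distrib,
              ← Finset.sum_sub_distrib]
            exact Finset.sum_congr rfl fun y _ => by ring
        _ = _ := by rw [hrowβ x, one_mul, one_mul]
    calc ∑ x, πβ x * ∑ y, Qtβ x y * Real.log (Qtβ x y / Qt0 x y)
        = (∑ x, πβ x * ∑ y, Qtβ x y * (β ^ 2 * G y + Real.log (rβ y) - Real.log (r0 y)))
          - (∑ x, πβ x * (Real.log (rβ x) - Real.log (r0 x))) - Real.log lamβ := by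
          simp only [hφx, mul_sub]
          rw [Finset.sum_sub_distrib, Finset.sum_sub_distrib, ← Finset.sum_mul, hπβ1, one_mul]
      _ = (∑ y, πβ y * (β ^ 2 * G y + Real.log (rβ y) - Real.log (r0 y)))
          - (∑ x, πβ x * (Real.log (rβ x) - Real.log (r0 x))) - Real.log lamβ := by
          congr 2
          calc ∑ x, πβ x * ∑ y, Qtβ x y * (β ^ 2 * G y + Real.log (rβ y) - Real.log (r0 y))
              = ∑ y, (∑ x, πβ x * Qtβ x y) * (β ^ 2 * G y + Real.log (rβ y) - Real.log (r0 y)) := by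
                simp_rw [Finset.mul_sum]
                rw [Finset.sum_comm]
                refine Finset.sum_congr rfl fun y _ => ?_
                rw [Finset.sum_mul]
                exact Finset.sum_congr rfl fun x _ => by ring
            _ = ∑ y, πβ y * (β ^ 2 * G y + Real.log (rβ y) - Real.log (r0 y)) := by
                simp_rw [hinvβ]
      _ = β ^ 2 * (∑ x, πβ x * G x) - Real.log lamβ := by
          rw [Finset.mul_sum, ← Finset.sum_sub_distrib]
          congr 1
          exact Finset.sum_congr rfl fun x _ => by ring
  -- nonnegativity of the per-step entropy production
  have hKnn : 0 ≤ ∑ x, πβ x * ∑ y, Qtβ x y * Real.log (Qtβ x y / Qt0 x y) := by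
    refine Finset.sum_nonneg fun x _ => mul_nonneg (hπβnn x) ?_
    have h0 : ∑ y, (Qtβ x y - Qt0 x y) = (0 : ℝ) := by
      rw [Finset.sum_sub_distrib, hrowβ, hrow0, sub_self]
    have h1 : ∑ y, (Qtβ x y - Qt0 x y) ≤ ∑ y, Qtβ x y * Real.log (Qtβ x y / Qt0 x y) :=
      Finset.sum_le_sum fun y _ => gibbs_pt (hQtβnn x y) (hQt0nn x y) (hsupp x y)
    rw [h0] at h1
    exact h1
  -- the entropy at each horizon
  have hfun : ∀ n : ℕ,
      (∑ p : Fin (n + 1) → S,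
        (πβ (p 0) * ∏ i : Fin n, Qtβ (p i.castSucc) (p i.succ)) *
          Real.log
            ((πβ (p 0) * ∏ i : Fin n, Qtβ (p i.castSucc) (p i.succ)) /
              (π0 (p 0) * ∏ i : Fin n, Qt0 (p i.castSucc) (p i.succ))))
      = (∑ x, πβ x * Real.log (πβ x / π0 x))
        + n * ∑ x, πβ x * ∑ y, Qtβ x y * Real.log (Qtβ x y / Qt0 x y) := by
    intro n
    induction n with
    | zero =>
      rw [← Equiv.sum_comp (Equiv.funUnique (Fin 1) S).symm]
      simp
    | succ n ih =>
      rw [Hrec πβ π0 Qtβ Qt0 hπβnn hπ0pos hQtβnn hsupp hrowβ hinvβ n, ih]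
      push_cast
      ring
  constructor
  · have h3 : Tendsto (fun n : ℕ =>
        (∑ x, πβ x * Real.log (πβ x / π0 x)) * (1 / (n : ℝ))
          + ∑ x, πβ x * ∑ y, Qtβ x y * Real.log (Qtβ x y / Qt0 x y)) atTop
        (nhds ((∑ x, πβ x * Real.log (πβ x / π0 x)) * 0
          + ∑ x, πβ x * ∑ y, Qtβ x y * Real.log (Qtβ x y / Qt0 x y))) :=
      (tendsto_one_div_atTop_nhds_zero_nat.const_mul _).add tendsto_const_nhds
    rw [mul_zero, zero_add] at h3
    rw [← hK]
    refine Tendsto.congr' ?_ h3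
    filter_upwards [eventually_ge_atTop 1] with n hn
    have hn' : (n : ℝ) ≠ 0 := Nat.cast_ne_zero.2 (by omega)
    rw [hfun n]
    field_simp
  · rw [← hK]
    exact hKnn
end

section
/- Let B_β = P₀ + β²C + β²ε_β and D_β = P₀ + β²C be square matrices on a finite set, where P₀ is a stochastic matrix, C is fixed, and all entries of ε_β tend to 0 as β → 0. Then for any probability row vector μ₀ and n = n(β) = x/(aβ²) (with x, a > 0 fixed), the remainder R_β := μ₀ (B_β^{n(β)} − D_β^{n(β)}) 1 satisfies |R_β| ≤ (1 + cβ² + β²‖ε_β‖_∞)^{n(β)} − (1 + cβ²)^{n(β)} for some constant c with ‖P₀ + β²C‖-row-sums bounded by 1 + cβ², and hence R_β → 0 as β → 0. -/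
open Filter Matrix

/-- Maximal absolute row sum of a matrix (the `L∞` operator norm). -/
noncomputable def rowNorm {S : Type*} [Fintype S] [Nonempty S] (X : Matrix S S ℝ) : ℝ :=
  Finset.univ.sup' Finset.univ_nonempty (fun u => ∑ v, |X u v|)

attribute [local instance] Matrix.linftyOpNormedRing Matrix.linftyOpNormedAddCommGroup

section aux

variable {S : Type*} [Fintype S] [Nonempty S]

lemma le_rowNorm (X : Matrix S S ℝ) (u : S) : ∑ v, |X u v| ≤ rowNorm X := by
  rw [rowNorm]; exact Finset.le_sup' (fun u => ∑ v, |X u v|) (Finset.mem_univ u)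

lemma rowNorm_nonneg (X : Matrix S S ℝ) : 0 ≤ rowNorm X := by
  obtain ⟨u⟩ := ‹Nonempty S›
  exact le_trans (Finset.sum_nonneg fun v _ => abs_nonneg _) (le_rowNorm X u)

lemma rowNorm_eq_norm [DecidableEq S] (X : Matrix S S ℝ) : rowNorm X = ‖X‖ := by
  rw [Matrix.linfty_opNorm_def, rowNorm,
    ← Finset.sup'_eq_sup (Finset.univ_nonempty (α := S)),
    Finset.comp_sup'_eq_sup'_comp (Finset.univ_nonempty (α := S)) NNReal.toReal
      (fun a b => by simp [NNReal.coe_max])]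
  congr 1
  ext u
  simp [Function.comp, Real.norm_eq_abs]

lemma rowNorm_smul_le (s : ℝ) (X : Matrix S S ℝ) :
    rowNorm (s • X) ≤ |s| * rowNorm X := by
  apply Finset.sup'_le
  intro u _
  calc ∑ v, |(s • X) u v| = |s| * ∑ v, |X u v| := by
        simp [Matrix.smul_apply, abs_mul, Finset.mul_sum]
  _ ≤ |s| * rowNorm X :=
      mul_le_mul_of_nonneg_left (le_rowNorm X u) (abs_nonneg s)

lemma dot_bound (M : Matrix S S ℝ) (μ0 : S → ℝ) (hnn : ∀ u, 0 ≤ μ0 u)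
    (h1 : ∑ u, μ0 u = 1) : |μ0 ⬝ᵥ M.mulVec (fun _ => 1)| ≤ rowNorm M := by
  have hrow : ∀ u, |∑ v, M u v| ≤ rowNorm M := fun u =>
    (Finset.abs_sum_le_sum_abs _ _).trans (le_rowNorm M u)
  calc |μ0 ⬝ᵥ M.mulVec (fun _ => 1)| = |∑ u, μ0 u * ∑ v, M u v| := by
        simp [dotProduct, Matrix.mulVec]
  _ ≤ ∑ u, |μ0 u * ∑ v, M u v| := Finset.abs_sum_le_sum_abs _ _
  _ ≤ ∑ u, μ0 u * rowNorm M := Finset.sum_le_sum fun u _ => by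
        rw [abs_mul, abs_of_nonneg (hnn u)]
        exact mul_le_mul_of_nonneg_left (hrow u) (hnn u)
  _ = rowNorm M := by rw [← Finset.sum_mul, h1, one_mul]

end aux

lemma norm_pow_sub_pow_le {R : Type*} [NormedRing R] [NormOneClass R]
    (B D : R) (d e : ℝ) (hd : 0 ≤ d) (hB : ‖B‖ ≤ d + e) (hD : ‖D‖ ≤ d)
    (hE : ‖B - D‖ ≤ e) : ∀ n : ℕ, ‖B ^ n - D ^ n‖ ≤ (d + e) ^ n - d ^ n := by
  have he : 0 ≤ e := (norm_nonneg _).trans hE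
  intro n
  induction n with
  | zero => simp
  | succ n ih =>
    have key : B ^ (n + 1) - D ^ (n + 1) = B * (B ^ n - D ^ n) + (B - D) * D ^ n := by
      rw [pow_succ', pow_succ']
      noncomm_ring
    have hDn : ‖D ^ n‖ ≤ d ^ n :=
      (norm_pow_le D n).trans (pow_le_pow_left₀ (norm_nonneg _) hD n)
    have hde : (0:ℝ) ≤ d + e := le_trans (norm_nonneg B) hB
    calc ‖B ^ (n + 1) - D ^ (n + 1)‖
        ≤ ‖B * (B ^ n - D ^ n)‖ + ‖(B - D) * D ^ n‖ := key ▸ norm_add_le _ _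
      _ ≤ ‖B‖ * ‖B ^ n - D ^ n‖ + ‖B - D‖ * ‖D ^ n‖ :=
          add_le_add (norm_mul_le _ _) (norm_mul_le _ _)
      _ ≤ (d + e) * ((d + e) ^ n - d ^ n) + e * d ^ n := by
          have h1 := mul_le_mul hB ih (norm_nonneg _) hde
          have h2 := mul_le_mul hE hDn (norm_nonneg _) he
          linarith
      _ = (d + e) ^ (n + 1) - d ^ (n + 1) := by ring

lemma real_pow_sub_pow_le (d e : ℝ) (hd : 0 ≤ d) (he : 0 ≤ e) :
    ∀ n : ℕ, (d + e) ^ n - d ^ n ≤ n * e * (d + e) ^ (n - 1) := by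
  intro n
  induction n with
  | zero => simp
  | succ n ih =>
    have hde : (0:ℝ) ≤ d + e := by linarith
    cases n with
    | zero => simp
    | succ m =>
      have ihm : (d + e) ^ (m + 1) - d ^ (m + 1) ≤ (m + 1 : ℕ) * e * (d + e) ^ m := by
        simpa using ih
      have hdm1 : d ^ (m + 1) ≤ (d + e) ^ (m + 1) :=
        pow_le_pow_left₀ hd (by linarith) _
      have expand : (d + e) ^ (m + 2) - d ^ (m + 2)
          = (d + e) * ((d + e) ^ (m + 1) - d ^ (m + 1)) + e * d ^ (m + 1) := by ring
      have hps : (d + e) ^ (m + 1) = (d + e) ^ m * (d + e) := pow_succ _ _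
      have h1 : (d + e) * ((d + e) ^ (m + 1) - d ^ (m + 1))
          ≤ ((m : ℝ) + 1) * e * (d + e) ^ (m + 1) := by
        calc (d + e) * ((d + e) ^ (m + 1) - d ^ (m + 1))
            ≤ (d + e) * (((m + 1 : ℕ) : ℝ) * e * (d + e) ^ m) :=
              mul_le_mul_of_nonneg_left ihm hde
          _ = ((m : ℝ) + 1) * e * (d + e) ^ (m + 1) := by rw [hps]; push_cast; ring
      have h2 := mul_le_mul_of_nonneg_left hdm1 he
      show (d + e) ^ (m + 2) - d ^ (m + 2) ≤ ((m + 2 : ℕ) : ℝ) * e * (d + e) ^ (m + 1)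
      push_cast
      linarith

/-- Error control for matrix powers with a small perturbation: with
`B_β = P₀ + β²C + β²ε_β` and `D_β = P₀ + β²C` (row sums of `D_β` bounded by
`1 + cβ²`), the remainder `R_β = μ₀ (B_β^n − D_β^n) 1` satisfies
`|R_β| ≤ (1 + cβ² + β²‖ε_β‖)ⁿ − (1 + cβ²)ⁿ`, and with `n(β) = ⌊x/(aβ²)⌋` it
tends to `0` as `β → 0`. -/
theorem stmt_18 {S : Type*} [Fintype S] [DecidableEq S] [Nonempty S]
    (P0 C : Matrix S S ℝ) (c a x : ℝ) (ha : 0 < a) (hx : 0 < x)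
    (hP0nn : ∀ u v, 0 ≤ P0 u v) (hP0stoch : ∀ u, ∑ v, P0 u v = 1)
    (hc : ∀ β : ℝ, rowNorm (P0 + β ^ 2 • C) ≤ 1 + c * β ^ 2)
    (ε : ℝ → Matrix S S ℝ)
    (hε : Tendsto (fun β => rowNorm (ε β)) (nhdsWithin 0 {(0 : ℝ)}ᶜ) (nhds 0))
    (μ0 : S → ℝ) (hμ0nn : ∀ u, 0 ≤ μ0 u) (hμ0 : ∑ u, μ0 u = 1) :
    (∀ β : ℝ, ∀ n : ℕ,
        |μ0 ⬝ᵥ (((P0 + β ^ 2 • C + β ^ 2 • ε β) ^ n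
              - (P0 + β ^ 2 • C) ^ n).mulVec (fun _ => 1))|
          ≤ (1 + c * β ^ 2 + β ^ 2 * rowNorm (ε β)) ^ n - (1 + c * β ^ 2) ^ n) ∧
    Tendsto
      (fun β : ℝ =>
        μ0 ⬝ᵥ (((P0 + β ^ 2 • C + β ^ 2 • ε β) ^ (Nat.floor (x / (a * β ^ 2)))
              - (P0 + β ^ 2 • C) ^ (Nat.floor (x / (a * β ^ 2)))).mulVec (fun _ => 1)))
      (nhdsWithin 0 {(0 : ℝ)}ᶜ) (nhds 0) := by
  have hmain : ∀ β : ℝ, ∀ n : ℕ,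
      |μ0 ⬝ᵥ (((P0 + β ^ 2 • C + β ^ 2 • ε β) ^ n
            - (P0 + β ^ 2 • C) ^ n).mulVec (fun _ => 1))|
        ≤ (1 + c * β ^ 2 + β ^ 2 * rowNorm (ε β)) ^ n - (1 + c * β ^ 2) ^ n := by
    intro β n
    set D : Matrix S S ℝ := P0 + β ^ 2 • C with hDdef
    set E : Matrix S S ℝ := β ^ 2 • ε β with hEdef
    set B : Matrix S S ℝ := P0 + β ^ 2 • C + β ^ 2 • ε β with hBdef
    have hBDE : B = D + E := rfl
    have hr : 0 ≤ rowNorm (ε β) := rowNorm_nonneg _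
    have hd0 : 0 ≤ 1 + c * β ^ 2 := le_trans (rowNorm_nonneg D) (hc β)
    have hD : ‖D‖ ≤ 1 + c * β ^ 2 := by rw [← rowNorm_eq_norm]; exact hc β
    have hEn : ‖E‖ ≤ β ^ 2 * rowNorm (ε β) := by
      rw [← rowNorm_eq_norm]
      calc rowNorm E ≤ |β ^ 2| * rowNorm (ε β) := rowNorm_smul_le _ _
        _ = β ^ 2 * rowNorm (ε β) := by rw [abs_of_nonneg (sq_nonneg β)]
    have hBD : B - D = E := by rw [hBDE]; exact add_sub_cancel_left D E
    have hE : ‖B - D‖ ≤ β ^ 2 * rowNorm (ε β) := by rw [hBD]; exact hEn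
    have hB : ‖B‖ ≤ (1 + c * β ^ 2) + β ^ 2 * rowNorm (ε β) := by
      rw [hBDE]
      exact (norm_add_le D E).trans (add_le_add hD hEn)
    have := norm_pow_sub_pow_le B D (1 + c * β ^ 2) (β ^ 2 * rowNorm (ε β))
      hd0 hB hD hE n
    rw [← rowNorm_eq_norm] at this
    exact le_trans (dot_bound _ μ0 hμ0nn hμ0) this
  refine ⟨hmain, ?_⟩
  apply squeeze_zero_norm'
    (a := fun β : ℝ =>
      (1 + c * β ^ 2 + β ^ 2 * rowNorm (ε β)) ^ (Nat.floor (x / (a * β ^ 2)))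
        - (1 + c * β ^ 2) ^ (Nat.floor (x / (a * β ^ 2))))
  · exact Eventually.of_forall fun β => by
      simpa [Real.norm_eq_abs] using hmain β (Nat.floor (x / (a * β ^ 2)))
  · -- g tends to 0
    have hKnn : (0:ℝ) ≤ x / a * Real.exp ((|c| + 1) * (x / a)) := by positivity
    apply squeeze_zero'
      (g := fun β : ℝ => x / a * Real.exp ((|c| + 1) * (x / a)) * rowNorm (ε β))
    · refine Eventually.of_forall fun β => ?_
      have hr : 0 ≤ rowNorm (ε β) := rowNorm_nonneg _
      have hd0 : 0 ≤ 1 + c * β ^ 2 :=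
        le_trans (rowNorm_nonneg (P0 + β ^ 2 • C)) (hc β)
      have := pow_le_pow_left₀ hd0
        (by nlinarith [sq_nonneg β] : 1 + c * β ^ 2 ≤ 1 + c * β ^ 2 + β ^ 2 * rowNorm (ε β))
        (Nat.floor (x / (a * β ^ 2)))
      linarith
    · filter_upwards [self_mem_nhdsWithin,
        hε.eventually (eventually_le_nhds one_pos)] with β hβ hrle
      have hβ0 : β ≠ 0 := hβ
      have hb2 : 0 < β ^ 2 := by positivity
      set n := Nat.floor (x / (a * β ^ 2)) with hn
      set r := rowNorm (ε β) with hrdef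
      have hr : 0 ≤ r := rowNorm_nonneg _
      have hd0 : 0 ≤ 1 + c * β ^ 2 :=
        le_trans (rowNorm_nonneg (P0 + β ^ 2 • C)) (hc β)
      have he0 : 0 ≤ β ^ 2 * r := by positivity
      have hfl : (n : ℝ) ≤ x / (a * β ^ 2) := Nat.floor_le (by positivity)
      have hβn : β ^ 2 * n ≤ x / a := by
        calc β ^ 2 * (n : ℝ) ≤ β ^ 2 * (x / (a * β ^ 2)) :=
              mul_le_mul_of_nonneg_left hfl hb2.le
          _ = x / a := by field_simp
      have main := real_pow_sub_pow_le (1 + c * β ^ 2) (β ^ 2 * r) hd0 he0 n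
      have hbase : (0:ℝ) ≤ 1 + c * β ^ 2 + β ^ 2 * r := by linarith
      have h1 : 1 + c * β ^ 2 + β ^ 2 * r ≤ Real.exp ((c + r) * β ^ 2) := by
        have h := Real.add_one_le_exp ((c + r) * β ^ 2)
        nlinarith
      have h2 : (1 + c * β ^ 2 + β ^ 2 * r) ^ (n - 1)
          ≤ Real.exp ((c + r) * β ^ 2) ^ (n - 1) := pow_le_pow_left₀ hbase h1 _
      have h3 : Real.exp ((c + r) * β ^ 2) ^ (n - 1)
          = Real.exp ((n - 1 : ℕ) * ((c + r) * β ^ 2)) := (Real.exp_nat_mul _ _).symm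
      have hn1 : ((n - 1 : ℕ) : ℝ) ≤ (n : ℝ) := Nat.cast_le.mpr (Nat.sub_le _ _)
      have hcr : c + r ≤ |c| + 1 := by linarith [le_abs_self c]
      have h4 : ((n - 1 : ℕ) : ℝ) * ((c + r) * β ^ 2) ≤ (|c| + 1) * (x / a) := by
        calc ((n - 1 : ℕ) : ℝ) * ((c + r) * β ^ 2)
            ≤ ((n - 1 : ℕ) : ℝ) * ((|c| + 1) * β ^ 2) :=
              mul_le_mul_of_nonneg_left
                (mul_le_mul_of_nonneg_right hcr hb2.le) (Nat.cast_nonneg _)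
          _ ≤ (n : ℝ) * ((|c| + 1) * β ^ 2) :=
              mul_le_mul_of_nonneg_right hn1 (by positivity)
          _ = (|c| + 1) * (β ^ 2 * n) := by ring
          _ ≤ (|c| + 1) * (x / a) :=
              mul_le_mul_of_nonneg_left hβn (by positivity)
      have h5 : (1 + c * β ^ 2 + β ^ 2 * r) ^ (n - 1)
          ≤ Real.exp ((|c| + 1) * (x / a)) :=
        h2.trans (h3 ▸ Real.exp_le_exp.mpr h4)
      have h6 : (n : ℝ) * (β ^ 2 * r) ≤ x / a * r := by
        nlinarith [mul_le_mul_of_nonneg_right hβn hr]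
      calc (1 + c * β ^ 2 + β ^ 2 * r) ^ n - (1 + c * β ^ 2) ^ n
          ≤ (n : ℝ) * (β ^ 2 * r) * (1 + c * β ^ 2 + β ^ 2 * r) ^ (n - 1) := main
        _ ≤ (n : ℝ) * (β ^ 2 * r) * Real.exp ((|c| + 1) * (x / a)) :=
            mul_le_mul_of_nonneg_left h5 (by positivity)
        _ ≤ (x / a * r) * Real.exp ((|c| + 1) * (x / a)) :=
            mul_le_mul_of_nonneg_right h6 (Real.exp_nonneg _)
        _ = x / a * Real.exp ((|c| + 1) * (x / a)) * r := by ring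
    · simpa using hε.const_mul (x / a * Real.exp ((|c| + 1) * (x / a)))
end
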